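/- Let G be a graph, G' be obtained from G by attaching a pendant vertex to every vertex of G, and suppose (Ũ_in, Ũ_ex) is a feasible pre-assignment of G' under the Mixed model with Ũ_in ∪ Ũ_ex ⊆ V(G). Then V(G) = Ũ_in ∪ Ũ_ex ∪ N_G(Ũ_ex). -/

import Mathlib

variable {V : Type*} [Fintype V] [DecidableEq V]

/-- `C` is a vertex cover of `G`: every edge has an endpoint in `C`. -/
def IsVertexCover (G : SimpleGraph V) (C : Finset V) : Prop :=
  ∀ ⦃u v : V⦄, G.Adj u v → u ∈ C ∨ v ∈ C

/-- `C` is a minimum vertex cover of `G`. -/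
def IsMinVertexCover (G : SimpleGraph V) (C : Finset V) : Prop :=
  IsVertexCover G C ∧ ∀ D : Finset V, IsVertexCover G D → C.card ≤ D.card

/-- The vertex cover number τ(G). -/
noncomputable def tau (G : SimpleGraph V) : ℕ :=
  sInf {n : ℕ | ∃ C : Finset V, IsVertexCover G C ∧ C.card = n}

/-- `I` is an independent set of `G`. -/
def IsIndepSet (G : SimpleGraph V) (I : Finset V) : Prop :=
  ∀ u ∈ I, ∀ v ∈ I, ¬ G.Adj u v

/-- `D` is a dominating set of `G`. -/
def IsDomSet (G : SimpleGraph V) (D : Finset V) : Prop :=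
  ∀ v : V, v ∈ D ∨ ∃ u ∈ D, G.Adj u v

/-- N(X): vertices outside `X` adjacent to some vertex of `X`. -/
def NFinset (G : SimpleGraph V) [DecidableRel G.Adj] (X : Finset V) : Finset V :=
  (X.biUnion fun v => G.neighborFinset v) \ X

/-- `C` is a vertex cover of the induced subgraph `G - S` (vertices outside `S`). -/
def IsVCOutside (G : SimpleGraph V) (S C : Finset V) : Prop :=
  Disjoint C S ∧ ∀ ⦃u v : V⦄, G.Adj u v → u ∉ S → v ∉ S → u ∈ C ∨ v ∈ C

/-- `C` is a minimum vertex cover of the induced subgraph `G - S`. -/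
def IsMinVCOutside (G : SimpleGraph V) (S C : Finset V) : Prop :=
  IsVCOutside G S C ∧ ∀ D : Finset V, IsVCOutside G S D → C.card ≤ D.card

/-- Feasibility under the Include model. -/
def FeasibleInclude (G : SimpleGraph V) (U : Finset V) : Prop :=
  ∃! C : Finset V, IsMinVertexCover G C ∧ U ⊆ C

/-- Feasibility under the Exclude model. -/
def FeasibleExclude (G : SimpleGraph V) (U : Finset V) : Prop :=
  ∃! C : Finset V, IsMinVertexCover G C ∧ Disjoint C U

/-- Feasibility under the Mixed model. -/
def FeasibleMixed (G : SimpleGraph V) (Uin Uex : Finset V) : Prop :=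
  ∃! C : Finset V, IsMinVertexCover G C ∧ Uin ⊆ C ∧ Disjoint C Uex

/-- The graph `G'` obtained by attaching a pendant vertex `Sum.inr v`
to each vertex `Sum.inl v` of `G`. -/
def pendant (G : SimpleGraph V) : SimpleGraph (V ⊕ V) where
  Adj x y :=
    match x, y with
    | Sum.inl u, Sum.inl v => G.Adj u v
    | Sum.inl u, Sum.inr v => u = v
    | Sum.inr u, Sum.inl v => u = v
    | Sum.inr _, Sum.inr _ => False
  symm := ⟨by
    rintro (u | u) (v | v) h
    · exact h.symm
    · exact h.symm
    · exact h.symm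
    · exact h⟩
  loopless := ⟨by
    rintro (u | u) h
    · exact G.irrefl h
    · exact h⟩

/-!
Every vertex cover `S` of `G` extends, by adding the pendant vertices of the vertices outside `S`,
to a vertex cover of `G'` of size `|V(G)|`; it is minimum because the pendant edges form a matching
of that size, and distinct `S` give distinct extensions. A feasible pre-assignment forces `Ũ_ex` to
be independent, so `V(G) \ Ũ_ex` is such a cover respecting the pre-assignment. A vertex `v`
outside `Ũ_in ∪ Ũ_ex ∪ N_G(Ũ_ex)` could be removed from it, giving a second one, against
uniqueness.
-/

open Finset

section IndepSet

variable {W : Type*} {G : SimpleGraph W}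

lemma IsVertexCover.isIndepSet_of_disjoint {C I : Finset W} (hC : IsVertexCover G C)
    (hCI : Disjoint C I) : IsIndepSet G I := fun _ hu _ hv huv =>
  (hC huv).elim (disjoint_left.mp hCI · hu) (disjoint_left.mp hCI · hv)

lemma IsIndepSet.isVertexCover_compl [Fintype W] [DecidableEq W] {I : Finset W}
    (hI : IsIndepSet G I) : IsVertexCover G Iᶜ := by
  intro u v huv
  by_contra! h
  simp only [mem_compl, not_not] at h
  exact hI u h.1 v h.2 huv

lemma IsIndepSet.insert [DecidableEq W] {I : Finset W} {v : W} (hI : IsIndepSet G I)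
    (hv : ∀ u ∈ I, ¬ G.Adj u v) : IsIndepSet G (insert v I) := by
  intro a ha b hb hab
  rw [mem_insert] at ha hb
  rcases ha with rfl | ha <;> rcases hb with rfl | hb
  · exact G.irrefl hab
  · exact hv b hb hab.symm
  · exact hv a ha hab
  · exact hI a ha b hb hab

lemma isIndepSet_of_isIndepSet_pendant [DecidableEq W] {I : Finset W}
    (hI : IsIndepSet (pendant G) (I.image Sum.inl)) : IsIndepSet G I := fun _ hu _ hv =>
  hI _ (mem_image_of_mem _ hu) _ (mem_image_of_mem _ hv)

end IndepSet

lemma not_adj_of_notMem_nFinset (G : SimpleGraph V) [DecidableRel G.Adj] {X : Finset V}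
    {v : V} (hvX : v ∉ X) (hvN : v ∉ NFinset G X) : ∀ u ∈ X, ¬ G.Adj u v := fun u hu huv =>
  hvN (mem_sdiff.mpr ⟨mem_biUnion.mpr ⟨u, hu, (G.mem_neighborFinset u v).mpr huv⟩, hvX⟩)

section Pendant

variable {G : SimpleGraph V}

lemma card_le_of_isVertexCover_pendant {D : Finset (V ⊕ V)}
    (hD : IsVertexCover (pendant G) D) : Fintype.card V ≤ D.card := by
  have hcover : (univ : Finset V) ⊆ D.toLeft ∪ D.toRight := fun v _ => by
    simpa using hD (show (pendant G).Adj (Sum.inl v) (Sum.inr v) from rfl)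
  calc Fintype.card V = (univ : Finset V).card := card_univ.symm
    _ ≤ (D.toLeft ∪ D.toRight).card := card_le_card hcover
    _ ≤ D.toLeft.card + D.toRight.card := card_union_le _ _
    _ = D.card := card_toLeft_add_card_toRight

/-- The cover `S ∪ {v' : v ∉ S}` of `pendant G`. -/
def pendantLift (S : Finset V) : Finset (V ⊕ V) :=
  S.disjSum Sᶜ

lemma pendantLift_injective : Function.Injective (pendantLift (V := V)) := fun _ _ h =>
  (disjSum_inj.mp h).1

lemma card_pendantLift (S : Finset V) : (pendantLift S).card = Fintype.card V := by
  rw [pendantLift, card_disjSum, card_add_card_compl]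

lemma isVertexCover_pendantLift {S : Finset V} (hS : IsVertexCover G S) :
    IsVertexCover (pendant G) (pendantLift S) := by
  rintro (u | u) (v | v) huv
  · simpa [pendantLift] using hS huv
  · obtain rfl : u = v := huv
    simpa [pendantLift] using em (u ∈ S)
  · obtain rfl : u = v := huv
    simpa [pendantLift] using (em (u ∈ S)).symm
  · exact huv.elim

lemma IsVertexCover.isMinVertexCover_pendantLift {S : Finset V} (hS : IsVertexCover G S) :
    IsMinVertexCover (pendant G) (pendantLift S) :=
  ⟨isVertexCover_pendantLift hS, fun _ hD =>
    (card_pendantLift S).trans_le (card_le_of_isVertexCover_pendant hD)⟩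

lemma image_inl_subset_pendantLift {U S : Finset V} :
    U.image Sum.inl ⊆ pendantLift S ↔ U ⊆ S := by
  simp [subset_iff, pendantLift]

lemma disjoint_pendantLift_image_inl {U S : Finset V} :
    Disjoint (pendantLift S) (U.image Sum.inl) ↔ Disjoint S U := by
  simp [disjoint_right, pendantLift]

lemma FeasibleMixed.eq_of_isVertexCover {Uin Uex S T : Finset V}
    (h : FeasibleMixed (pendant G) (Uin.image Sum.inl) (Uex.image Sum.inl))
    (hS : IsVertexCover G S) (hSin : Uin ⊆ S) (hSex : Disjoint S Uex)
    (hT : IsVertexCover G T) (hTin : Uin ⊆ T) (hTex : Disjoint T Uex) : S = T :=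
  pendantLift_injective <| h.unique
    ⟨hS.isMinVertexCover_pendantLift, image_inl_subset_pendantLift.mpr hSin,
      disjoint_pendantLift_image_inl.mpr hSex⟩
    ⟨hT.isMinVertexCover_pendantLift, image_inl_subset_pendantLift.mpr hTin,
      disjoint_pendantLift_image_inl.mpr hTex⟩

end Pendant

/-- if (Ũin, Ũex) ⊆ V(G) is Mixed-feasible for G', then
V(G) = Ũin ∪ Ũex ∪ N_G(Ũex). -/
theorem stmt11 (G : SimpleGraph V) [DecidableRel G.Adj] (Uin Uex : Finset V)
    (h : FeasibleMixed (pendant G) (Uin.image Sum.inl) (Uex.image Sum.inl)) :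
    Finset.univ = Uin ∪ Uex ∪ NFinset G Uex := by
  obtain ⟨C, hC, hCin, hCex⟩ := h.exists
  have hindep : IsIndepSet G Uex :=
    isIndepSet_of_isIndepSet_pendant (hC.1.isIndepSet_of_disjoint hCex)
  have hUin : Disjoint Uin Uex := by
    have := disjoint_of_subset_left hCin hCex
    rwa [disjoint_image Sum.inl_injective] at this
  refine (eq_univ_of_forall fun v => ?_).symm
  by_contra hv
  simp only [mem_union, not_or] at hv
  obtain ⟨⟨hvin, hvex⟩, hvN⟩ := hv
  have hindep' := hindep.insert (not_adj_of_notMem_nFinset G hvex hvN)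
  have heq : Uexᶜ = (insert v Uex)ᶜ :=
    h.eq_of_isVertexCover hindep.isVertexCover_compl (subset_compl_iff_disjoint_right.mpr hUin)
      disjoint_compl_left hindep'.isVertexCover_compl
      (subset_compl_iff_disjoint_right.mpr (disjoint_insert_right.mpr ⟨hvin, hUin⟩))
      (disjoint_compl_left.mono_right (subset_insert v Uex))
  exact hvex (compl_injective heq ▸ mem_insert_self v Uex)
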